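/- Let β > 0. If V is a bounded upper semicontinuous viscosity subsolution of the discounted HJBQVI, then for every x ∈ ℝ, min{ V(T,x) − g_β(x), V(T,x) − M_β V(T,x) } ≤ 0. Symmetrically, if V is a bounded lower semicontinuous viscosity supersolution of the discounted HJBQVI, then for every x ∈ ℝ, min{ V(T,x) − g_β(x), V(T,x) − M_β V(T,x) } ≥ 0. (The discounted HJBQVI exhibits no boundary layer at the terminal time T.) -/

import Mathlib

open Filter Topology Set TopologicalSpace

noncomputable section

/-- The closed parabolic domain `Ω̄ = [0,T] × ℝ`. -/
def Omb (T : ℝ) : Set (ℝ × ℝ) := Set.Icc 0 T ×ˢ (Set.univ : Set ℝ)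

/-- The (undiscounted) intervention operator applied to a payoff. -/
def Mop {Y : Type*} [MetricSpace Y] (Z : ℝ × ℝ → NonemptyCompacts Y)
    (Γ K : ℝ → ℝ → Y → ℝ) (V : ℝ × ℝ → ℝ) (p : ℝ × ℝ) : ℝ :=
  sSup ((fun z => V (p.1, Γ p.1 p.2 z) + K p.1 p.2 z) '' (Z p : Set Y))

/-- The discounted intervention operator
`M_β V(t,x) = sup_{z ∈ Z(t,x)} { V(t, Γ(t,x,z)) + e^{βt} K(t,x,z) }`. -/
def MopB {Y : Type*} [MetricSpace Y] (β : ℝ) (Z : ℝ × ℝ → NonemptyCompacts Y)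
    (Γ K : ℝ → ℝ → Y → ℝ) (V : ℝ × ℝ → ℝ) (p : ℝ × ℝ) : ℝ :=
  Mop Z Γ (fun t x z => Real.exp (β * t) * K t x z) V p

/-- The discounted HJBQVI operator `F_β((t,x), r, (q,p), A, ℓ)`. -/
def Fb (T β : ℝ) {W : Type*} (a b : ℝ → W → ℝ) (f : ℝ → ℝ → W → ℝ) (g : ℝ → ℝ) :
    (ℝ × ℝ) × ℝ × (ℝ × ℝ) × ℝ × ℝ → ℝ
  | ((t, x), r, (q, p), A, l) =>
    if t < T then
      min (-q + β * r -
          ⨆ w, (((1 : ℝ) / 2) * b x w ^ 2 * A + a x w * p + Real.exp (β * t) * f t x w))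
        (r - l)
    else min (r - Real.exp (β * T) * g x) (r - l)

/-- Lower semicontinuous envelope relative to the domain. -/
def lowEnv (T : ℝ) (F : (ℝ × ℝ) × ℝ × (ℝ × ℝ) × ℝ × ℝ → ℝ)
    (ξ : (ℝ × ℝ) × ℝ × (ℝ × ℝ) × ℝ × ℝ) : ℝ :=
  liminf F (𝓝[{η : (ℝ × ℝ) × ℝ × (ℝ × ℝ) × ℝ × ℝ | η.1 ∈ Omb T}] ξ)

/-- Upper semicontinuous envelope relative to the domain. -/
def upEnv (T : ℝ) (F : (ℝ × ℝ) × ℝ × (ℝ × ℝ) × ℝ × ℝ → ℝ)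
    (ξ : (ℝ × ℝ) × ℝ × (ℝ × ℝ) × ℝ × ℝ) : ℝ :=
  limsup F (𝓝[{η : (ℝ × ℝ) × ℝ × (ℝ × ℝ) × ℝ × ℝ | η.1 ∈ Omb T}] ξ)

/-- Test functions: once continuously differentiable in `t`, twice in `x`. -/
def C12 (φ φt φx φxx : ℝ × ℝ → ℝ) : Prop :=
  Continuous φ ∧ Continuous φt ∧ Continuous φx ∧ Continuous φxx ∧
    (∀ p : ℝ × ℝ, HasDerivAt (fun t => φ (t, p.2)) (φt p) p.1) ∧
    (∀ p : ℝ × ℝ, HasDerivAt (fun x => φ (p.1, x)) (φx p) p.2) ∧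
    (∀ p : ℝ × ℝ, HasDerivAt (fun x => φx (p.1, x)) (φxx p) p.2)

/-- Viscosity subsolution of the discounted HJBQVI. -/
def IsSubsolB (T β : ℝ) {W Y : Type*} [MetricSpace Y]
    (a b : ℝ → W → ℝ) (f : ℝ → ℝ → W → ℝ) (g : ℝ → ℝ)
    (Z : ℝ × ℝ → NonemptyCompacts Y) (Γ K : ℝ → ℝ → Y → ℝ)
    (V : ℝ × ℝ → ℝ) : Prop :=
  ∀ φ φt φx φxx : ℝ × ℝ → ℝ, C12 φ φt φx φxx → ∀ p ∈ Omb T,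
    IsLocalMaxOn (fun q => V q - φ q) (Omb T) p →
    lowEnv T (Fb T β a b f g) (p, V p, (φt p, φx p), φxx p, MopB β Z Γ K V p) ≤ 0

/-- Viscosity supersolution of the discounted HJBQVI. -/
def IsSupersolB (T β : ℝ) {W Y : Type*} [MetricSpace Y]
    (a b : ℝ → W → ℝ) (f : ℝ → ℝ → W → ℝ) (g : ℝ → ℝ)
    (Z : ℝ × ℝ → NonemptyCompacts Y) (Γ K : ℝ → ℝ → Y → ℝ)
    (V : ℝ × ℝ → ℝ) : Prop :=
  ∀ φ φt φx φxx : ℝ × ℝ → ℝ, C12 φ φt φx φxx → ∀ p ∈ Omb T,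
    IsLocalMinOn (fun q => V q - φ q) (Omb T) p →
    0 ≤ upEnv T (Fb T β a b f g) (p, V p, (φt p, φx p), φxx p, MopB β Z Γ K V p)


/-!
Penalize at the terminal point: maximizing `V - φ` with `φ(t, x) = M (x - x₀)² + n (T - t)` over
a compact neighbourhood of `(T, x₀)` in `Ω̄` gives, for `M` and then `n` large, a local maximum
`(t, x)` close to `(T, x₀)` with `V (T, x₀) ≤ V (t, x)`. The jet of `φ` there has time derivative
`-n`, and the Hamiltonian is bounded near it because `W` is compact, so the diffusion branch
`-q + βr - H` of `F_β` is `≥ 1` on a whole neighbourhood of the jet. Since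
`F_β ≥ min (diffusion branch, terminal branch)` whether `t < T` or not, and the terminal branch
`min (r - g_β(x), r - ℓ)` is continuous, the subsolution inequality `(F_β)_* ≤ 0` forces
`min (V - g_β, V - M_β V) ≤ 0` at `(t, x)`. Letting `(t, x) → (T, x₀)` needs only the upper
semicontinuity of `M_β V`, a supremum of an upper semicontinuous payoff over the
Hausdorff-continuous compact sets `Z(t, x)`. Supersolutions are treated in the same way with the
test function `-φ`.
-/

open Metric

section SupOverCompacts

variable {X Y : Type*} [TopologicalSpace X] [MetricSpace Y] {Z : X → NonemptyCompacts Y}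
  {φ : X × Y → ℝ} {s : Set X} {x₀ : X}

theorem Metric.NonemptyCompacts.exists_dist_lt_of_dist_lt {A B : NonemptyCompacts Y} {r : ℝ}
    (h : dist A B < r) {y : Y} (hy : y ∈ A) : ∃ z ∈ B, dist y z < r :=
  exists_dist_lt_of_hausdorffDist_lt hy h <| hausdorffEDist_ne_top_of_nonempty_of_bounded
    A.nonempty B.nonempty A.isCompact.isBounded B.isCompact.isBounded

theorem upperSemicontinuousWithinAt_sSup_image (hZ : ContinuousWithinAt Z s x₀) (hx₀ : x₀ ∈ s)
    (hφ : UpperSemicontinuousOn φ (s ×ˢ univ))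
    (hbdd : ∀ x ∈ s, BddAbove ((fun y => φ (x, y)) '' Z x)) :
    UpperSemicontinuousWithinAt (fun x => sSup ((fun y => φ (x, y)) '' Z x)) s x₀ := by
  intro c hc
  obtain ⟨c', hc', hc'c⟩ := exists_between hc
  obtain ⟨v, hv, hφv⟩ := upperSemicontinuousOn_iff_preimage_Iio.1 hφ c'
  have hZv : ({x₀} : Set X) ×ˢ (Z x₀ : Set Y) ⊆ v := by
    rintro ⟨x, y⟩ ⟨rfl, hy⟩
    exact (hφv.subset ⟨⟨hx₀, trivial⟩, (le_csSup (hbdd x hx₀) ⟨y, hy, rfl⟩).trans_lt hc'⟩).2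
  obtain ⟨u, o, hu, ho, hx₀u, hZo, huo⟩ :=
    generalized_tube_lemma isCompact_singleton (Z x₀).isCompact hv hZv
  obtain ⟨δ, hδ, hδo⟩ := (Z x₀).isCompact.exists_thickening_subset_open ho hZo
  filter_upwards [nhdsWithin_le_nhds (hu.mem_nhds (hx₀u rfl)), self_mem_nhdsWithin,
    hZ (ball_mem_nhds _ hδ)] with x hxu hxs hxZ
  refine (csSup_le ((Z x).nonempty.image _) ?_).trans_lt hc'c
  rintro _ ⟨y, hy, rfl⟩
  obtain ⟨y', hy', hyy'⟩ := NonemptyCompacts.exists_dist_lt_of_dist_lt hxZ hy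
  exact (hφv.superset
    ⟨⟨hxs, trivial⟩, huo ⟨hxu, hδo (mem_thickening_iff.2 ⟨y', hy', hyy'⟩)⟩⟩).2.le

theorem lowerSemicontinuousWithinAt_sSup_image (hZ : ContinuousWithinAt Z s x₀) (hx₀ : x₀ ∈ s)
    (hφ : LowerSemicontinuousOn φ (s ×ˢ univ))
    (hbdd : ∀ x ∈ s, BddAbove ((fun y => φ (x, y)) '' Z x)) :
    LowerSemicontinuousWithinAt (fun x => sSup ((fun y => φ (x, y)) '' Z x)) s x₀ := by
  intro c hc
  obtain ⟨_, ⟨y₀, hy₀, rfl⟩, hcy₀⟩ := exists_lt_of_lt_csSup ((Z x₀).nonempty.image _) hc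
  obtain ⟨v, hv, hφv⟩ := lowerSemicontinuousOn_iff_preimage_Ioi.1 hφ c
  obtain ⟨u, o, hu, ho, hx₀u, hy₀o, huo⟩ :=
    isOpen_prod_iff.1 hv x₀ y₀ (hφv.subset ⟨⟨hx₀, trivial⟩, hcy₀⟩).2
  obtain ⟨r, hr, hro⟩ := isOpen_iff.1 ho y₀ hy₀o
  filter_upwards [nhdsWithin_le_nhds (hu.mem_nhds hx₀u), self_mem_nhdsWithin,
    hZ (ball_mem_nhds _ hr)] with x hxu hxs hxZ
  obtain ⟨y, hy, hy₀y⟩ := NonemptyCompacts.exists_dist_lt_of_dist_lt (mem_ball'.1 hxZ) hy₀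
  exact (hφv.superset ⟨⟨hxs, trivial⟩, huo ⟨hxu, hro (mem_ball'.2 hy₀y)⟩⟩).2.trans_le
    (le_csSup (hbdd x hxs) ⟨y, hy, rfl⟩)

end SupOverCompacts

section Intervention

variable {Y : Type*} {T β C : ℝ} {Γ K : ℝ → ℝ → Y → ℝ} {V : ℝ × ℝ → ℝ}

/-- `MopB β Z Γ K V y` is, by definition, the supremum of `interventionPayoff β Γ K V (y, ·)`
over `Z y`. -/
def interventionPayoff (β : ℝ) (Γ K : ℝ → ℝ → Y → ℝ) (V : ℝ × ℝ → ℝ) (q : (ℝ × ℝ) × Y) : ℝ :=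
  V (q.1.1, Γ q.1.1 q.1.2 q.2) + Real.exp (β * q.1.1) * K q.1.1 q.1.2 q.2

theorem bddAbove_interventionPayoff (hKle : ∀ t ∈ Icc (0 : ℝ) T, ∀ x z, K t x z ≤ 0)
    (hV : ∀ y ∈ Omb T, V y ≤ C) {y : ℝ × ℝ} (hy : y ∈ Omb T) (s : Set Y) :
    BddAbove ((fun z => interventionPayoff β Γ K V (y, z)) '' s) := by
  refine ⟨C, ?_⟩
  rintro _ ⟨z, -, rfl⟩
  have hcost : Real.exp (β * y.1) * K y.1 y.2 z ≤ 0 :=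
    mul_nonpos_of_nonneg_of_nonpos (Real.exp_pos _).le (hKle y.1 hy.1 y.2 z)
  have hshift : V (y.1, Γ y.1 y.2 z) ≤ C := hV _ ⟨hy.1, trivial⟩
  exact add_le_of_le_of_nonpos hshift hcost

variable [MetricSpace Y] {Z : ℝ × ℝ → NonemptyCompacts Y}

theorem ContinuousOn.omb_prod_univ {F : ℝ → ℝ → Y → ℝ}
    (hF : ContinuousOn (fun p : ℝ × ℝ × Y => F p.1 p.2.1 p.2.2) {p | p.1 ∈ Icc 0 T}) :
    ContinuousOn (fun q : (ℝ × ℝ) × Y => F q.1.1 q.1.2 q.2) (Omb T ×ˢ univ) :=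
  hF.comp (by fun_prop : Continuous fun q : (ℝ × ℝ) × Y => (q.1.1, q.1.2, q.2)).continuousOn
    fun _ hq => hq.1.1

theorem upperSemicontinuousOn_interventionPayoff
    (hΓ : ContinuousOn (fun p : ℝ × ℝ × Y => Γ p.1 p.2.1 p.2.2) {p | p.1 ∈ Icc 0 T})
    (hK : ContinuousOn (fun p : ℝ × ℝ × Y => K p.1 p.2.1 p.2.2) {p | p.1 ∈ Icc 0 T})
    (hV : UpperSemicontinuousOn V (Omb T)) :
    UpperSemicontinuousOn (interventionPayoff β Γ K V) (Omb T ×ˢ univ) :=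
  (hV.comp ((continuous_fst.comp continuous_fst).continuousOn.prodMk hΓ.omb_prod_univ)
    fun _ hq => ⟨hq.1.1, trivial⟩).add
    ((by fun_prop : Continuous fun q : (ℝ × ℝ) × Y => Real.exp (β * q.1.1)).continuousOn.mul
      hK.omb_prod_univ).upperSemicontinuousOn

theorem lowerSemicontinuousOn_interventionPayoff
    (hΓ : ContinuousOn (fun p : ℝ × ℝ × Y => Γ p.1 p.2.1 p.2.2) {p | p.1 ∈ Icc 0 T})
    (hK : ContinuousOn (fun p : ℝ × ℝ × Y => K p.1 p.2.1 p.2.2) {p | p.1 ∈ Icc 0 T})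
    (hV : LowerSemicontinuousOn V (Omb T)) :
    LowerSemicontinuousOn (interventionPayoff β Γ K V) (Omb T ×ˢ univ) :=
  (hV.comp ((continuous_fst.comp continuous_fst).continuousOn.prodMk hΓ.omb_prod_univ)
    fun _ hq => ⟨hq.1.1, trivial⟩).add
    ((by fun_prop : Continuous fun q : (ℝ × ℝ) × Y => Real.exp (β * q.1.1)).continuousOn.mul
      hK.omb_prod_univ).lowerSemicontinuousOn

theorem upperSemicontinuousWithinAt_mopB (hZ : ContinuousOn Z (Omb T))
    (hΓ : ContinuousOn (fun p : ℝ × ℝ × Y => Γ p.1 p.2.1 p.2.2) {p | p.1 ∈ Icc 0 T})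
    (hK : ContinuousOn (fun p : ℝ × ℝ × Y => K p.1 p.2.1 p.2.2) {p | p.1 ∈ Icc 0 T})
    (hKle : ∀ t ∈ Icc (0 : ℝ) T, ∀ x z, K t x z ≤ 0) (hV : ∀ y ∈ Omb T, V y ≤ C)
    (hVu : UpperSemicontinuousOn V (Omb T)) {y : ℝ × ℝ} (hy : y ∈ Omb T) :
    UpperSemicontinuousWithinAt (MopB β Z Γ K V) (Omb T) y :=
  upperSemicontinuousWithinAt_sSup_image (hZ y hy) hy
    (upperSemicontinuousOn_interventionPayoff hΓ hK hVu)
    fun _ hx => bddAbove_interventionPayoff hKle hV hx _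

theorem lowerSemicontinuousWithinAt_mopB (hZ : ContinuousOn Z (Omb T))
    (hΓ : ContinuousOn (fun p : ℝ × ℝ × Y => Γ p.1 p.2.1 p.2.2) {p | p.1 ∈ Icc 0 T})
    (hK : ContinuousOn (fun p : ℝ × ℝ × Y => K p.1 p.2.1 p.2.2) {p | p.1 ∈ Icc 0 T})
    (hKle : ∀ t ∈ Icc (0 : ℝ) T, ∀ x z, K t x z ≤ 0) (hV : ∀ y ∈ Omb T, V y ≤ C)
    (hVl : LowerSemicontinuousOn V (Omb T)) {y : ℝ × ℝ} (hy : y ∈ Omb T) :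
    LowerSemicontinuousWithinAt (MopB β Z Γ K V) (Omb T) y :=
  lowerSemicontinuousWithinAt_sSup_image (hZ y hy) hy
    (lowerSemicontinuousOn_interventionPayoff hΓ hK hVl)
    fun _ hx => bddAbove_interventionPayoff hKle hV hx _

end Intervention

section Hamiltonian

variable {W : Type*} {T β : ℝ} {a b : ℝ → W → ℝ} {f : ℝ → ℝ → W → ℝ}

def hamiltonian (β : ℝ) (a b : ℝ → W → ℝ) (f : ℝ → ℝ → W → ℝ) (t x p A : ℝ) : ℝ :=
  ⨆ w, (1 / 2 * b x w ^ 2 * A + a x w * p + Real.exp (β * t) * f t x w)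

def HamiltonianBoundedOn (T β : ℝ) (a b : ℝ → W → ℝ) (f : ℝ → ℝ → W → ℝ) (R CS : ℝ) : Prop :=
  ∀ t ∈ Icc 0 T, ∀ x p A, |x| ≤ R → |p| ≤ R → |A| ≤ R → |hamiltonian β a b f t x p A| ≤ CS

def HamiltonianLocallyBounded (T β : ℝ) (a b : ℝ → W → ℝ) (f : ℝ → ℝ → W → ℝ) : Prop :=
  ∀ R, ∃ CS, HamiltonianBoundedOn T β a b f R CS

theorem hamiltonianLocallyBounded [TopologicalSpace W] [CompactSpace W] [Nonempty W]
    (hac : Continuous fun p : ℝ × W => a p.1 p.2) (hbc : Continuous fun p : ℝ × W => b p.1 p.2)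
    (hfc : ContinuousOn (fun p : ℝ × ℝ × W => f p.1 p.2.1 p.2.2) {p | p.1 ∈ Icc 0 T}) :
    HamiltonianLocallyBounded T β a b f := by
  intro R
  set box : Set ((ℝ × ℝ × ℝ × ℝ) × W) :=
    (Icc 0 T ×ˢ Icc (-R) R ×ˢ Icc (-R) R ×ˢ Icc (-R) R) ×ˢ univ
  have hbox : IsCompact box :=
    (isCompact_Icc.prod (isCompact_Icc.prod (isCompact_Icc.prod isCompact_Icc))).prod
      isCompact_univ
  have hf' : ContinuousOn (fun q : (ℝ × ℝ × ℝ × ℝ) × W => f q.1.1 q.1.2.1 q.2) box :=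
    hfc.comp (by fun_prop : Continuous fun q : (ℝ × ℝ × ℝ × ℝ) × W =>
      (q.1.1, q.1.2.1, q.2)).continuousOn fun _ hq => hq.1.1
  have hxw : Continuous fun q : (ℝ × ℝ × ℝ × ℝ) × W => (q.1.2.1, q.2) := by fun_prop
  have ha' : Continuous fun q : (ℝ × ℝ × ℝ × ℝ) × W => a q.1.2.1 q.2 := hac.comp hxw
  have hb' : Continuous fun q : (ℝ × ℝ × ℝ × ℝ) × W => b q.1.2.1 q.2 := hbc.comp hxw
  obtain ⟨CS, hCS⟩ := hbox.exists_bound_of_continuousOn (f := fun q =>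
    1 / 2 * b q.1.2.1 q.2 ^ 2 * q.1.2.2.2 + a q.1.2.1 q.2 * q.1.2.2.1 +
      Real.exp (β * q.1.1) * f q.1.1 q.1.2.1 q.2)
    ((((continuous_const.mul (hb'.pow 2)).mul (by fun_prop)).add
      (ha'.mul (by fun_prop))).continuousOn.add
      ((by fun_prop : Continuous fun q : (ℝ × ℝ × ℝ × ℝ) × W =>
        Real.exp (β * q.1.1)).continuousOn.mul hf'))
  refine ⟨CS, fun t ht x p A hx hp hA => ?_⟩
  have hw : ∀ w, |1 / 2 * b x w ^ 2 * A + a x w * p + Real.exp (β * t) * f t x w| ≤ CS :=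
    fun w => hCS ((t, x, p, A), w) ⟨⟨ht, abs_le.1 hx, abs_le.1 hp, abs_le.1 hA⟩, trivial⟩
  have hbdd : BddAbove (range fun w => 1 / 2 * b x w ^ 2 * A + a x w * p +
      Real.exp (β * t) * f t x w) :=
    ⟨CS, by rintro _ ⟨w, rfl⟩; exact (abs_le.1 (hw w)).2⟩
  obtain ⟨w₀⟩ := ‹Nonempty W›
  exact abs_le.2 ⟨(abs_le.1 (hw w₀)).1.trans (le_ciSup hbdd w₀),
    ciSup_le fun w => (abs_le.1 (hw w)).2⟩

end Hamiltonian

section Envelope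

theorem nonpos_of_liminf_nonpos {α : Type*} {l : Filter α} {F D G : α → ℝ} {g₀ : ℝ}
    (hF : l.IsCoboundedUnder (· ≥ ·) F) (hDG : ∀ a, min (D a) (G a) ≤ F a)
    (hD : ∀ᶠ a in l, 1 ≤ D a) (hG : Tendsto G l (𝓝 g₀)) (h : liminf F l ≤ 0) : g₀ ≤ 0 := by
  by_contra! hg₀
  have hev : ∀ᶠ a in l, min 1 (g₀ / 2) ≤ F a := by
    filter_upwards [hD, hG.eventually (eventually_gt_nhds (half_lt_self hg₀))] with a hDa hGa
    exact (min_le_min hDa hGa.le).trans (hDG a)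
  have := le_liminf_of_le hF hev
  have : 0 < min 1 (g₀ / 2) := lt_min one_pos (half_pos hg₀)
  linarith

theorem nonneg_of_limsup_nonneg {α : Type*} {l : Filter α} {F D G : α → ℝ} {g₀ : ℝ}
    (hF : l.IsCoboundedUnder (· ≤ ·) F) (hDG : ∀ a, F a ≤ max (D a) (G a))
    (hD : ∀ᶠ a in l, D a ≤ -1) (hG : Tendsto G l (𝓝 g₀)) (h : 0 ≤ limsup F l) : 0 ≤ g₀ := by
  by_contra! hg₀
  have hev : ∀ᶠ a in l, F a ≤ max (-1) (g₀ / 2) := by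
    filter_upwards [hD, hG.eventually (eventually_lt_nhds (by linarith : g₀ < g₀ / 2))]
      with a hDa hGa
    exact (hDG a).trans (max_le_max hDa hGa.le)
  have := limsup_le_of_le hF hev
  have : max (-1) (g₀ / 2) < 0 := max_lt (by norm_num) (by linarith)
  linarith

variable {W : Type*} {T β : ℝ} {a b : ℝ → W → ℝ} {f : ℝ → ℝ → W → ℝ} {g : ℝ → ℝ}

def diffusionPart (β : ℝ) (a b : ℝ → W → ℝ) (f : ℝ → ℝ → W → ℝ) :
    (ℝ × ℝ) × ℝ × (ℝ × ℝ) × ℝ × ℝ → ℝ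
  | ((t, x), r, (q, p), A, _) => -q + β * r - hamiltonian β a b f t x p A

def terminalPart (T β : ℝ) (g : ℝ → ℝ) : (ℝ × ℝ) × ℝ × (ℝ × ℝ) × ℝ × ℝ → ℝ
  | ((_, x), r, _, _, l) => min (r - Real.exp (β * T) * g x) (r - l)

theorem continuous_terminalPart (hg : Continuous g) : Continuous (terminalPart T β g) :=
  show Continuous fun η : (ℝ × ℝ) × ℝ × (ℝ × ℝ) × ℝ × ℝ =>
    min (η.2.1 - Real.exp (β * T) * g η.1.2) (η.2.1 - η.2.2.2.2) by fun_prop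

theorem min_diffusionPart_terminalPart_le_Fb (η : (ℝ × ℝ) × ℝ × (ℝ × ℝ) × ℝ × ℝ) :
    min (diffusionPart β a b f η) (terminalPart T β g η) ≤ Fb T β a b f g η := by
  obtain ⟨⟨t, x⟩, r, ⟨q, p⟩, A, l⟩ := η
  simp only [Fb, diffusionPart, terminalPart, hamiltonian]
  split_ifs
  · exact min_le_min le_rfl (min_le_right _ _)
  · exact min_le_right _ _

theorem Fb_le_max_diffusionPart_terminalPart (η : (ℝ × ℝ) × ℝ × (ℝ × ℝ) × ℝ × ℝ) :
    Fb T β a b f g η ≤ max (diffusionPart β a b f η) (terminalPart T β g η) := by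
  obtain ⟨⟨t, x⟩, r, ⟨q, p⟩, A, l⟩ := η
  simp only [Fb, diffusionPart, terminalPart, hamiltonian]
  split_ifs
  · exact (min_le_left _ _).trans (le_max_left _ _)
  · exact le_max_right _ _

theorem Fb_le_sub (η : (ℝ × ℝ) × ℝ × (ℝ × ℝ) × ℝ × ℝ) :
    Fb T β a b f g η ≤ η.2.1 - η.2.2.2.2 := by
  obtain ⟨⟨t, x⟩, r, ⟨q, p⟩, A, l⟩ := η
  simp only [Fb]
  split_ifs <;> exact min_le_right _ _

theorem abs_diffusionPart_add_le {R CS : ℝ}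
    (hH : HamiltonianBoundedOn T β a b f R CS)
    {y : ℝ × ℝ} {r q p A l : ℝ} (hx : |y.2| + 1 ≤ R) (hp : |p| + 1 ≤ R) (hA : |A| + 1 ≤ R)
    {η : (ℝ × ℝ) × ℝ × (ℝ × ℝ) × ℝ × ℝ} (hη : η.1 ∈ Omb T)
    (hd : dist η (y, r, (q, p), A, l) < 1) :
    |diffusionPart β a b f η + q| ≤ 1 + |β| * (|r| + 1) + CS := by
  obtain ⟨⟨t', x'⟩, r', ⟨q', p'⟩, A', l'⟩ := η
  simp only [Prod.dist_eq, Real.dist_eq, max_lt_iff] at hd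
  obtain ⟨⟨-, hx'⟩, hr', ⟨hq', hp'⟩, hA', -⟩ := hd
  have near : ∀ {u v : ℝ}, |u - v| < 1 → |u| ≤ |v| + 1 := fun {u v} h => by
    linarith [abs_sub_abs_le_abs_sub u v]
  have hH' := abs_le.1 <|
    hH t' hη.1 x' p' A' ((near hx').trans hx) ((near hp').trans hp) ((near hA').trans hA)
  have hβr : |β * r'| ≤ |β| * (|r| + 1) := by
    rw [abs_mul]; exact mul_le_mul_of_nonneg_left (near hr') (abs_nonneg β)
  have hβr' := abs_le.1 hβr
  have hq'' := abs_lt.1 hq'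
  simp only [diffusionPart]
  rw [abs_le]
  constructor <;> linarith

theorem terminalPart_nonpos_of_lowEnv_nonpos {R CS : ℝ}
    (hH : HamiltonianBoundedOn T β a b f R CS)
    (hg : Continuous g) {y : ℝ × ℝ} {r q p A l : ℝ} (hy : y ∈ Omb T) (hx : |y.2| + 1 ≤ R)
    (hp : |p| + 1 ≤ R) (hA : |A| + 1 ≤ R) (hq : 2 + |β| * (|r| + 1) + CS ≤ -q)
    (h : lowEnv T (Fb T β a b f g) (y, r, (q, p), A, l) ≤ 0) :
    terminalPart T β g (y, r, (q, p), A, l) ≤ 0 := by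
  set ξ : (ℝ × ℝ) × ℝ × (ℝ × ℝ) × ℝ × ℝ := (y, r, (q, p), A, l)
  have hnear : ∀ᶠ η in 𝓝[{η | η.1 ∈ Omb T}] ξ, η.1 ∈ Omb T ∧ dist η ξ < 1 :=
    eventually_mem_nhdsWithin.and (nhdsWithin_le_nhds (ball_mem_nhds ξ one_pos))
  have : (𝓝[{η | η.1 ∈ Omb T}] ξ).NeBot := nhdsWithin_neBot_of_mem hy
  have hrl : ∀ᶠ η in 𝓝[{η | η.1 ∈ Omb T}] ξ, η.2.1 - η.2.2.2.2 < r - l + 1 :=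
    nhdsWithin_le_nhds <| (by fun_prop : Continuous fun η : (ℝ × ℝ) × ℝ × (ℝ × ℝ) × ℝ × ℝ =>
      η.2.1 - η.2.2.2.2).continuousAt.eventually (eventually_lt_nhds (lt_add_one _))
  refine nonpos_of_liminf_nonpos ?_ min_diffusionPart_terminalPart_le_Fb ?_
    (continuous_terminalPart hg).continuousWithinAt h
  · exact isCoboundedUnder_ge_of_eventually_le _ (hrl.mono fun η hη => (Fb_le_sub η).trans hη.le)
  · filter_upwards [hnear] with η ⟨hη, hd⟩
    have := abs_le.1 (abs_diffusionPart_add_le hH hx hp hA hη hd)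
    linarith

theorem terminalPart_nonneg_of_upEnv_nonneg {R CS : ℝ}
    (hH : HamiltonianBoundedOn T β a b f R CS)
    (hg : Continuous g) {y : ℝ × ℝ} {r q p A l : ℝ} (hy : y ∈ Omb T) (hx : |y.2| + 1 ≤ R)
    (hp : |p| + 1 ≤ R) (hA : |A| + 1 ≤ R) (hq : 2 + |β| * (|r| + 1) + CS ≤ q)
    (h : 0 ≤ upEnv T (Fb T β a b f g) (y, r, (q, p), A, l)) :
    0 ≤ terminalPart T β g (y, r, (q, p), A, l) := by
  set ξ : (ℝ × ℝ) × ℝ × (ℝ × ℝ) × ℝ × ℝ := (y, r, (q, p), A, l)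
  have hnear : ∀ᶠ η in 𝓝[{η | η.1 ∈ Omb T}] ξ, η.1 ∈ Omb T ∧ dist η ξ < 1 :=
    eventually_mem_nhdsWithin.and (nhdsWithin_le_nhds (ball_mem_nhds ξ one_pos))
  have : (𝓝[{η | η.1 ∈ Omb T}] ξ).NeBot := nhdsWithin_neBot_of_mem hy
  have hG := (continuous_terminalPart (T := T) (β := β) hg).continuousWithinAt
    (s := {η | η.1 ∈ Omb T}) (x := ξ)
  refine nonneg_of_limsup_nonneg ?_ Fb_le_max_diffusionPart_terminalPart ?_ hG h
  · refine isCoboundedUnder_le_of_eventually_le _ (x := min (-q - (1 + |β| * (|r| + 1) + CS))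
      (terminalPart T β g ξ - 1)) ?_
    filter_upwards [hnear, hG.eventually (eventually_gt_nhds (sub_one_lt _))]
      with η ⟨hη, hd⟩ hGη
    have := abs_le.1 (abs_diffusionPart_add_le hH hx hp hA hη hd)
    exact (min_le_min (by linarith) hGη.le).trans (min_diffusionPart_terminalPart_le_Fb η)
  · filter_upwards [hnear] with η ⟨hη, hd⟩
    have := abs_le.1 (abs_diffusionPart_add_le hH hx hp hA hη hd)
    linarith

end Envelope

section Penalization

def penalty (T x₀ M n : ℝ) (y : ℝ × ℝ) : ℝ := M * (y.2 - x₀) ^ 2 + n * (T - y.1)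

theorem C12_penalty (T x₀ M n : ℝ) :
    C12 (penalty T x₀ M n) (fun _ => -n) (fun y => 2 * M * (y.2 - x₀)) (fun _ => 2 * M) := by
  refine ⟨by unfold penalty; fun_prop, continuous_const, by fun_prop, continuous_const,
    fun y => ?_, fun y => ?_, fun y => ?_⟩
  · simp only [penalty]
    simpa using (((hasDerivAt_id y.1).const_sub T).const_mul n).const_add (M * (y.2 - x₀) ^ 2)
  · exact ((((hasDerivAt_id y.2).sub_const x₀).pow 2).const_mul M).add_const (n * (T - y.1))
      |>.congr_deriv (by simp only [id_eq, Nat.cast_ofNat]; ring)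
  · simpa using ((hasDerivAt_id y.2).sub_const x₀).const_mul (2 * M)

theorem penalty_neg (T x₀ M n : ℝ) : penalty T x₀ (-M) (-n) = -penalty T x₀ M n := by
  funext y
  simp only [penalty, Pi.neg_apply]
  ring

theorem exists_isLocalMaxOn_sub_penalty {V : ℝ × ℝ → ℝ} {T x₀ C m M n : ℝ} (hT : 0 ≤ T)
    (hV : ∀ y ∈ Omb T, |V y| ≤ C) (hVu : UpperSemicontinuousOn V (Omb T)) (hm : 0 < m)
    (hm1 : m ≤ 1) (hM : 2 * C < M * m ^ 2) (hn : 2 * C < n * m) :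
    ∃ y ∈ Omb T, IsLocalMaxOn (fun q => V q - penalty T x₀ M n q) (Omb T) y ∧
      dist y (T, x₀) < m ∧ V (T, x₀) ≤ V y := by
  have hT₀ : (T, x₀) ∈ Omb T := ⟨⟨hT, le_rfl⟩, trivial⟩
  set Q := Omb T ∩ closedBall (T, x₀) 1
  have hT₀Q : (T, x₀) ∈ Q := ⟨hT₀, mem_closedBall_self zero_le_one⟩
  have hQ : IsCompact Q := (isCompact_closedBall _ _).inter_left (isClosed_Icc.prod isClosed_univ)
  have hψ : UpperSemicontinuousOn (fun q => V q - penalty T x₀ M n q) Q := by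
    simpa only [sub_eq_add_neg] using (hVu.mono inter_subset_left).add
      ((by unfold penalty; fun_prop : Continuous fun q => -penalty T x₀ M n q).continuousOn
        |>.upperSemicontinuousOn)
  obtain ⟨y, ⟨hy, -⟩, hmax⟩ := hψ.exists_isMaxOn ⟨_, hT₀Q⟩ hQ
  have hty : 0 ≤ T - y.1 := sub_nonneg.2 hy.1.2
  have hgain : V (T, x₀) + penalty T x₀ M n y ≤ V y := by
    have h0 : penalty T x₀ M n (T, x₀) = 0 := by simp [penalty]
    have : V (T, x₀) - penalty T x₀ M n (T, x₀) ≤ V y - penalty T x₀ M n y := hmax hT₀Q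
    linarith
  have hpen : penalty T x₀ M n y ≤ 2 * C := by
    linarith [abs_le.1 (hV y hy), abs_le.1 (hV _ hT₀)]
  have hC : 0 ≤ C := (abs_nonneg _).trans (hV _ hT₀)
  have hMpos : 0 < M := by nlinarith
  have hnpos : 0 < n := by nlinarith
  have hx : |y.2 - x₀| < m := by
    have : (y.2 - x₀) ^ 2 < m ^ 2 := by
      unfold penalty at hpen
      nlinarith [mul_nonneg hnpos.le hty]
    exact abs_lt_of_sq_lt_sq this hm.le
  have ht : T - y.1 < m := by
    unfold penalty at hpen
    nlinarith [mul_nonneg hMpos.le (sq_nonneg (y.2 - x₀))]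
  have hdist : dist y (T, x₀) < m := by
    rw [Prod.dist_eq, Real.dist_eq, Real.dist_eq, abs_sub_comm, abs_of_nonneg hty]
    exact max_lt ht hx
  have hQy : Q ∈ 𝓝[Omb T] y :=
    inter_mem_nhdsWithin _ (closedBall_mem_nhds_of_mem (hdist.trans_le hm1))
  refine ⟨y, hy, hmax.filter_mono (le_principal_iff.2 hQy), hdist, ?_⟩
  have : 0 ≤ penalty T x₀ M n y := by unfold penalty; positivity
  linarith

theorem abs_penalty_jet_le {x₀ M R : ℝ} {y : ℝ × ℝ} (hy : |y.2 - x₀| ≤ 1)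
    (hR : 2 * |M| + |x₀| + 2 ≤ R) :
    |y.2| + 1 ≤ R ∧ |2 * M * (y.2 - x₀)| + 1 ≤ R ∧ |2 * M| + 1 ≤ R := by
  have hy₂ : |y.2| ≤ |x₀| + 1 := by linarith [abs_sub_abs_le_abs_sub y.2 x₀]
  have hM : |2 * M| = 2 * |M| := by rw [abs_mul, abs_two]
  have hp : |2 * M * (y.2 - x₀)| ≤ 2 * |M| := by
    rw [abs_mul, hM]; exact mul_le_of_le_one_right (by positivity) hy
  refine ⟨?_, ?_, ?_⟩ <;> linarith [abs_nonneg M, abs_nonneg x₀]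

end Penalization

section Terminal

variable {W Y : Type*} [MetricSpace Y] {T β C : ℝ} {a b : ℝ → W → ℝ} {f : ℝ → ℝ → W → ℝ}
  {g : ℝ → ℝ} {Z : ℝ × ℝ → NonemptyCompacts Y} {Γ K : ℝ → ℝ → Y → ℝ} {V : ℝ × ℝ → ℝ}

theorem HamiltonianLocallyBounded.exists_penalty_params (hH : HamiltonianLocallyBounded T β a b f)
    (hC : 0 ≤ C) {m : ℝ} (hm : 0 < m) (x₀ : ℝ) :
    ∃ M n CS, 2 * C < M * m ^ 2 ∧ 2 * C < n * m ∧ 2 + |β| * (C + 1) + CS ≤ n ∧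
      HamiltonianBoundedOn T β a b f (2 * |M| + |x₀| + 2) CS := by
  set M := (2 * C + 1) / m ^ 2
  obtain ⟨CS, hCS⟩ := hH (2 * |M| + |x₀| + 2)
  refine ⟨M, 2 + |β| * (C + 1) + |CS| + (2 * C + 1) / m, CS, ?_, ?_, ?_, hCS⟩
  · rw [div_mul_cancel₀ _ (by positivity)]; linarith
  · have : 0 ≤ (2 + |β| * (C + 1) + |CS|) * m := by positivity
    rw [add_mul, div_mul_cancel₀ _ hm.ne']; linarith
  · linarith [le_abs_self CS, (by positivity : 0 ≤ (2 * C + 1) / m)]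

theorem IsSubsolB.exists_near_min_nonpos (hT : 0 ≤ T) (hH : HamiltonianLocallyBounded T β a b f)
    (hg : Continuous g) (hV : ∀ y ∈ Omb T, |V y| ≤ C) (hVu : UpperSemicontinuousOn V (Omb T))
    (hsub : IsSubsolB T β a b f g Z Γ K V) (x₀ : ℝ) {m : ℝ} (hm : 0 < m) (hm1 : m ≤ 1) :
    ∃ y ∈ Omb T, dist y (T, x₀) < m ∧ V (T, x₀) ≤ V y ∧
      min (V y - Real.exp (β * T) * g y.2) (V y - MopB β Z Γ K V y) ≤ 0 := by
  have hC : 0 ≤ C := (abs_nonneg _).trans (hV (T, x₀) ⟨⟨hT, le_rfl⟩, trivial⟩)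
  obtain ⟨M, n, CS, hM, hn, hnCS, hCS⟩ := hH.exists_penalty_params hC hm x₀
  obtain ⟨y, hy, hmax, hdist, hVy⟩ :=
    exists_isLocalMaxOn_sub_penalty (x₀ := x₀) hT hV hVu hm hm1 hM hn
  have hy₂ : |y.2 - x₀| ≤ 1 := by
    simp only [Prod.dist_eq, Real.dist_eq, max_lt_iff] at hdist
    linarith [hdist.2]
  obtain ⟨hx, hp, hA⟩ := abs_penalty_jet_le (M := M) hy₂ le_rfl
  have hq : 2 + |β| * (|V y| + 1) + CS ≤ -(-n) := by
    linarith [mul_le_mul_of_nonneg_left (add_le_add_right (hV y hy) 1) (abs_nonneg β)]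
  exact ⟨y, hy, hdist, hVy, terminalPart_nonpos_of_lowEnv_nonpos hCS hg hy hx hp hA hq
    (hsub _ _ _ _ (C12_penalty T x₀ M n) y hy hmax)⟩

theorem IsSupersolB.exists_near_min_nonneg (hT : 0 ≤ T)
    (hH : HamiltonianLocallyBounded T β a b f) (hg : Continuous g) (hV : ∀ y ∈ Omb T, |V y| ≤ C)
    (hVl : LowerSemicontinuousOn V (Omb T)) (hsup : IsSupersolB T β a b f g Z Γ K V) (x₀ : ℝ)
    {m : ℝ} (hm : 0 < m) (hm1 : m ≤ 1) :
    ∃ y ∈ Omb T, dist y (T, x₀) < m ∧ V y ≤ V (T, x₀) ∧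
      0 ≤ min (V y - Real.exp (β * T) * g y.2) (V y - MopB β Z Γ K V y) := by
  have hC : 0 ≤ C := (abs_nonneg _).trans (hV (T, x₀) ⟨⟨hT, le_rfl⟩, trivial⟩)
  obtain ⟨M, n, CS, hM, hn, hnCS, hCS⟩ := hH.exists_penalty_params hC hm x₀
  have hV' : ∀ y ∈ Omb T, |(-V) y| ≤ C := fun y hy => by rw [Pi.neg_apply, abs_neg]; exact hV y hy
  obtain ⟨y, hy, hmax, hdist, hVy⟩ := exists_isLocalMaxOn_sub_penalty (x₀ := x₀) hT hV'
    (continuous_neg.comp_lowerSemicontinuousOn_antitone hVl fun _ _ => neg_le_neg) hm hm1 hM hn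
  have hmin : IsLocalMinOn (fun q => V q - penalty T x₀ (-M) (-n) q) (Omb T) y := by
    have hfun : (fun q => V q - penalty T x₀ (-M) (-n) q) =
        fun q => -((-V) q - penalty T x₀ M n q) := by
      funext q
      simp only [penalty_neg, Pi.neg_apply]
      ring
    exact hfun ▸ hmax.neg
  have hy₂ : |y.2 - x₀| ≤ 1 := by
    simp only [Prod.dist_eq, Real.dist_eq, max_lt_iff] at hdist
    linarith [hdist.2]
  obtain ⟨hx, hp, hA⟩ := abs_penalty_jet_le (M := -M) hy₂ (by rw [abs_neg])
  have hq : 2 + |β| * (|V y| + 1) + CS ≤ -(-n) := by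
    linarith [mul_le_mul_of_nonneg_left (add_le_add_right (hV y hy) 1) (abs_nonneg β)]
  exact ⟨y, hy, hdist, neg_le_neg_iff.1 hVy, terminalPart_nonneg_of_upEnv_nonneg hCS hg hy hx hp hA
    hq (hsup _ _ _ _ (C12_penalty T x₀ (-M) (-n)) y hy hmin)⟩

theorem IsSubsolB.min_terminal_nonpos (hT : 0 ≤ T) (hH : HamiltonianLocallyBounded T β a b f)
    (hg : Continuous g) (hZ : ContinuousOn Z (Omb T))
    (hΓ : ContinuousOn (fun p : ℝ × ℝ × Y => Γ p.1 p.2.1 p.2.2) {p | p.1 ∈ Icc 0 T})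
    (hK : ContinuousOn (fun p : ℝ × ℝ × Y => K p.1 p.2.1 p.2.2) {p | p.1 ∈ Icc 0 T})
    (hKle : ∀ t ∈ Icc (0 : ℝ) T, ∀ x z, K t x z ≤ 0) (hV : ∀ y ∈ Omb T, |V y| ≤ C)
    (hVu : UpperSemicontinuousOn V (Omb T)) (hsub : IsSubsolB T β a b f g Z Γ K V) (x₀ : ℝ) :
    min (V (T, x₀) - Real.exp (β * T) * g x₀) (V (T, x₀) - MopB β Z Γ K V (T, x₀)) ≤ 0 := by
  by_contra! hpos
  obtain ⟨hgV, hMV⟩ := lt_min_iff.1 hpos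
  have hnear : ∀ᶠ y in 𝓝[Omb T] (T, x₀),
      0 < min (V (T, x₀) - Real.exp (β * T) * g y.2) (V (T, x₀) - MopB β Z Γ K V y) := by
    filter_upwards [nhdsWithin_le_nhds <| (by fun_prop : Continuous fun y : ℝ × ℝ =>
        Real.exp (β * T) * g y.2).continuousAt.eventually
          (eventually_lt_nhds (show Real.exp (β * T) * g x₀ < V (T, x₀) by linarith)),
      upperSemicontinuousWithinAt_mopB (β := β) hZ hΓ hK hKle
        (fun y hy => (abs_le.1 (hV y hy)).2) hVu ⟨⟨hT, le_rfl⟩, trivial⟩ (V (T, x₀))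
        (by linarith)] with y hgy hMy
    exact lt_min (by linarith) (by linarith)
  obtain ⟨m, hm, hball⟩ := mem_nhdsWithin_iff.1 hnear
  obtain ⟨y, hy, hdist, hVy, hmin⟩ :=
    hsub.exists_near_min_nonpos hT hH hg hV hVu x₀ (lt_min hm one_pos) (min_le_right _ _)
  have hle := min_le_min (sub_le_sub_right hVy (Real.exp (β * T) * g y.2))
    (sub_le_sub_right hVy (MopB β Z Γ K V y))
  exact ((hball ⟨hdist.trans_le (min_le_left _ _), hy⟩).trans_le (hle.trans hmin)).false

theorem IsSupersolB.min_terminal_nonneg (hT : 0 ≤ T) (hH : HamiltonianLocallyBounded T β a b f)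
    (hg : Continuous g) (hZ : ContinuousOn Z (Omb T))
    (hΓ : ContinuousOn (fun p : ℝ × ℝ × Y => Γ p.1 p.2.1 p.2.2) {p | p.1 ∈ Icc 0 T})
    (hK : ContinuousOn (fun p : ℝ × ℝ × Y => K p.1 p.2.1 p.2.2) {p | p.1 ∈ Icc 0 T})
    (hKle : ∀ t ∈ Icc (0 : ℝ) T, ∀ x z, K t x z ≤ 0) (hV : ∀ y ∈ Omb T, |V y| ≤ C)
    (hVl : LowerSemicontinuousOn V (Omb T)) (hsup : IsSupersolB T β a b f g Z Γ K V) (x₀ : ℝ) :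
    0 ≤ min (V (T, x₀) - Real.exp (β * T) * g x₀) (V (T, x₀) - MopB β Z Γ K V (T, x₀)) := by
  by_contra! hneg
  have hnear : ∀ᶠ y in 𝓝[Omb T] (T, x₀),
      min (V (T, x₀) - Real.exp (β * T) * g y.2) (V (T, x₀) - MopB β Z Γ K V y) < 0 := by
    rcases min_lt_iff.1 hneg with hgV | hMV
    · filter_upwards [nhdsWithin_le_nhds <| (by fun_prop : Continuous fun y : ℝ × ℝ =>
          Real.exp (β * T) * g y.2).continuousAt.eventually
            (eventually_gt_nhds (show V (T, x₀) < Real.exp (β * T) * g x₀ by linarith))]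
        with y hgy
      exact min_lt_iff.2 (Or.inl (by linarith))
    · filter_upwards [lowerSemicontinuousWithinAt_mopB (β := β) hZ hΓ hK hKle
          (fun y hy => (abs_le.1 (hV y hy)).2) hVl ⟨⟨hT, le_rfl⟩, trivial⟩ (V (T, x₀))
          (by linarith)]
        with y hMy
      exact min_lt_iff.2 (Or.inr (by linarith))
  obtain ⟨m, hm, hball⟩ := mem_nhdsWithin_iff.1 hnear
  obtain ⟨y, hy, hdist, hVy, hmin⟩ :=
    hsup.exists_near_min_nonneg hT hH hg hV hVl x₀ (lt_min hm one_pos) (min_le_right _ _)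
  have hle := min_le_min (sub_le_sub_right hVy (Real.exp (β * T) * g y.2))
    (sub_le_sub_right hVy (MopB β Z Γ K V y))
  exact ((hmin.trans hle).trans_lt (hball ⟨hdist.trans_le (min_le_left _ _), hy⟩)).false

end Terminal

theorem hjbqvi_no_boundary_layer_general
    (T : ℝ) (hT : 0 < T) (β : ℝ)
    {W : Type*} [MetricSpace W] [CompactSpace W] [Nonempty W]
    {Y : Type*} [MetricSpace Y]
    (Z : ℝ × ℝ → NonemptyCompacts Y) (hZ : ContinuousOn Z (Omb T))
    (f : ℝ → ℝ → W → ℝ)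
    (hfc : ContinuousOn (fun p : ℝ × ℝ × W => f p.1 p.2.1 p.2.2)
      {p : ℝ × ℝ × W | p.1 ∈ Set.Icc 0 T})
    (g : ℝ → ℝ) (hgc : Continuous g)
    (Γ : ℝ → ℝ → Y → ℝ)
    (hΓ : ContinuousOn (fun p : ℝ × ℝ × Y => Γ p.1 p.2.1 p.2.2)
      {p : ℝ × ℝ × Y | p.1 ∈ Set.Icc 0 T})
    (K : ℝ → ℝ → Y → ℝ)
    (hK : ContinuousOn (fun p : ℝ × ℝ × Y => K p.1 p.2.1 p.2.2)
      {p : ℝ × ℝ × Y | p.1 ∈ Set.Icc 0 T})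
    (hKneg : ∃ δ > (0 : ℝ), ∀ t ∈ Set.Icc (0 : ℝ) T, ∀ (x : ℝ) (z : Y), K t x z ≤ -δ)
    (a b : ℝ → W → ℝ)
    (hac : Continuous fun p : ℝ × W => a p.1 p.2)
    (hbc : Continuous fun p : ℝ × W => b p.1 p.2) :
    (∀ V : ℝ × ℝ → ℝ, (∃ C, ∀ p ∈ Omb T, |V p| ≤ C) →
      UpperSemicontinuousOn V (Omb T) → IsSubsolB T β a b f g Z Γ K V →
      ∀ x : ℝ,
        min (V (T, x) - Real.exp (β * T) * g x) (V (T, x) - MopB β Z Γ K V (T, x)) ≤ 0) ∧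
    (∀ V : ℝ × ℝ → ℝ, (∃ C, ∀ p ∈ Omb T, |V p| ≤ C) →
      LowerSemicontinuousOn V (Omb T) → IsSupersolB T β a b f g Z Γ K V →
      ∀ x : ℝ,
        0 ≤ min (V (T, x) - Real.exp (β * T) * g x) (V (T, x) - MopB β Z Γ K V (T, x))) := by
  have hH : HamiltonianLocallyBounded T β a b f := hamiltonianLocallyBounded hac hbc hfc
  obtain ⟨δ, hδ, hKδ⟩ := hKneg
  have hKle : ∀ t ∈ Icc (0 : ℝ) T, ∀ x z, K t x z ≤ 0 :=
    fun t ht x z => (hKδ t ht x z).trans (neg_nonpos.2 hδ.le)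
  exact ⟨fun V ⟨_, hV⟩ hVu hsub => hsub.min_terminal_nonpos hT.le hH hgc hZ hΓ hK hKle hV hVu,
    fun V ⟨_, hV⟩ hVl hsup => hsup.min_terminal_nonneg hT.le hH hgc hZ hΓ hK hKle hV hVl⟩

/-- No boundary layer at the terminal time for the discounted HJBQVI: every bounded
upper semicontinuous subsolution `V` satisfies
`min { V(T,x) − g_β(x), V(T,x) − M_β V(T,x) } ≤ 0` for all `x`, and every bounded lower
semicontinuous supersolution satisfies the symmetric inequality `≥ 0`. -/
theorem hjbqvi_no_boundary_layer
    (T : ℝ) (hT : 0 < T) (β : ℝ) (hβ : 0 < β)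
    {W : Type*} [MetricSpace W] [CompactSpace W] [Nonempty W]
    {Y : Type*} [MetricSpace Y]
    (Z : ℝ × ℝ → NonemptyCompacts Y) (hZ : ContinuousOn Z (Omb T))
    (f : ℝ → ℝ → W → ℝ)
    (hfc : ContinuousOn (fun p : ℝ × ℝ × W => f p.1 p.2.1 p.2.2)
      {p : ℝ × ℝ × W | p.1 ∈ Set.Icc 0 T})
    (hfb : ∃ C, ∀ t ∈ Set.Icc (0 : ℝ) T, ∀ (x : ℝ) (w : W), |f t x w| ≤ C)
    (g : ℝ → ℝ) (hgc : Continuous g) (hgb : ∃ C, ∀ x, |g x| ≤ C)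
    (Γ : ℝ → ℝ → Y → ℝ)
    (hΓ : ContinuousOn (fun p : ℝ × ℝ × Y => Γ p.1 p.2.1 p.2.2)
      {p : ℝ × ℝ × Y | p.1 ∈ Set.Icc 0 T})
    (K : ℝ → ℝ → Y → ℝ)
    (hK : ContinuousOn (fun p : ℝ × ℝ × Y => K p.1 p.2.1 p.2.2)
      {p : ℝ × ℝ × Y | p.1 ∈ Set.Icc 0 T})
    (hKneg : ∃ δ > (0 : ℝ), ∀ t ∈ Set.Icc (0 : ℝ) T, ∀ (x : ℝ) (z : Y), K t x z ≤ -δ)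
    (a b : ℝ → W → ℝ)
    (hac : Continuous fun p : ℝ × W => a p.1 p.2)
    (hbc : Continuous fun p : ℝ × W => b p.1 p.2)
    (L : ℝ) (hLip : ∀ x x' w, |a x w - a x' w| + |b x w - b x' w| ≤ L * |x - x'|)
    (hMg : ∀ x : ℝ, Mop Z Γ K (fun q => g q.2) (T, x) ≤ g x) :
    (∀ V : ℝ × ℝ → ℝ, (∃ C, ∀ p ∈ Omb T, |V p| ≤ C) →
      UpperSemicontinuousOn V (Omb T) → IsSubsolB T β a b f g Z Γ K V →
      ∀ x : ℝ,
        min (V (T, x) - Real.exp (β * T) * g x) (V (T, x) - MopB β Z Γ K V (T, x)) ≤ 0) ∧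
    (∀ V : ℝ × ℝ → ℝ, (∃ C, ∀ p ∈ Omb T, |V p| ≤ C) →
      LowerSemicontinuousOn V (Omb T) → IsSupersolB T β a b f g Z Γ K V →
      ∀ x : ℝ,
        0 ≤ min (V (T, x) - Real.exp (β * T) * g x) (V (T, x) - MopB β Z Γ K V (T, x))) :=
  hjbqvi_no_boundary_layer_general T hT β Z hZ f hfc g hgc Γ hΓ K hK hKneg a b hac hbc
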